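/- Let d, m ∈ ℕ and N ∈ ℕ. Let D₁, D₂ : ℝ^d → ℝ^d and M₁, …, M_N : ℝ^d → ℝ^d be linear maps, A : ℝ^d → ℝ^m a linear map, b ∈ ℝ^m, and β, λ > 0. Define f(u) = β Σ_{i=1}^2 ‖D_i u‖₁ + λ Σ_{i=1}^N ‖M_i u‖₁ + (1/2)‖Au − b‖₂², and for μ, τ > 0 define the quadratic-penalty objective F_{μ,τ}(u, r₁, r₂, s₁, …, s_N) = β Σ_{i=1}^2 (‖r_i‖₁ + (μ/2)‖r_i − D_i u‖₂²) + λ Σ_{i=1}^N (‖s_i‖₁ + (τ/2)‖s_i − M_i u‖₂²) + (1/2)‖Au − b‖₂². Suppose f attains its global minimum on ℝ^d. Let (μ_k) and (τ_k) be sequences of positive reals tending to ∞, and for each k let (u^k, r₁^k, r₂^k, s₁^k, …, s_N^k) be a global minimizer of F_{μ_k, τ_k}. If u^k → u*, r_i^k → r_i* (i = 1,2), and s_i^k → s_i* (i = 1,…,N) as k → ∞, then r_i* = D_i u* for i = 1,2, s_i* = M_i u* for i = 1,…,N, and u* is a global minimizer of f. -/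
import Mathlib

open Filter Topology

/-- ℓ¹ norm on `ℝ^n`. -/
noncomputable def l1 {n : ℕ} (x : Fin n → ℝ) : ℝ := ∑ j, |x j|

/-- Squared Euclidean norm on `ℝ^n`. -/
noncomputable def sqnorm {n : ℕ} (x : Fin n → ℝ) : ℝ := ∑ j, (x j) ^ 2

/-- The TV–L1–L2 objective
`f(u) = β Σ_{i=1}^2 ‖D_i u‖₁ + λ Σ_{i=1}^N ‖M_i u‖₁ + (1/2)‖Au − b‖₂²`. -/
noncomputable def tvObj (d m N : ℕ)
    (D : Fin 2 → (Fin d → ℝ) →ₗ[ℝ] (Fin d → ℝ))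
    (M : Fin N → (Fin d → ℝ) →ₗ[ℝ] (Fin d → ℝ))
    (A : (Fin d → ℝ) →ₗ[ℝ] (Fin m → ℝ)) (b : Fin m → ℝ)
    (β lam : ℝ) (u : Fin d → ℝ) : ℝ :=
  β * (∑ i, l1 (D i u)) + lam * (∑ i, l1 (M i u)) + (1 / 2) * sqnorm (A u - b)

/-- The quadratic-penalty objective
`F_{μ,τ}(u,r,s) = β Σᵢ (‖rᵢ‖₁ + (μ/2)‖rᵢ − Dᵢu‖₂²) + λ Σᵢ (‖sᵢ‖₁ + (τ/2)‖sᵢ − Mᵢu‖₂²)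
 + (1/2)‖Au − b‖₂²`. -/
noncomputable def penObj (d m N : ℕ)
    (D : Fin 2 → (Fin d → ℝ) →ₗ[ℝ] (Fin d → ℝ))
    (M : Fin N → (Fin d → ℝ) →ₗ[ℝ] (Fin d → ℝ))
    (A : (Fin d → ℝ) →ₗ[ℝ] (Fin m → ℝ)) (b : Fin m → ℝ)
    (β lam μ τ : ℝ)
    (u : Fin d → ℝ) (r : Fin 2 → Fin d → ℝ) (s : Fin N → Fin d → ℝ) : ℝ :=
  β * (∑ i, (l1 (r i) + (μ / 2) * sqnorm (r i - D i u))) +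
    lam * (∑ i, (l1 (s i) + (τ / 2) * sqnorm (s i - M i u))) +
    (1 / 2) * sqnorm (A u - b)

lemma l1_nonneg {n : ℕ} (x : Fin n → ℝ) : 0 ≤ l1 x :=
  Finset.sum_nonneg fun _ _ => abs_nonneg _
lemma sqnorm_nonneg {n : ℕ} (x : Fin n → ℝ) : 0 ≤ sqnorm x :=
  Finset.sum_nonneg fun _ _ => sq_nonneg _
lemma sqnorm_eq_zero {n : ℕ} {x : Fin n → ℝ} (h : sqnorm x = 0) : x = 0 := by
  funext j
  have := (Finset.sum_eq_zero_iff_of_nonneg (fun i _ => sq_nonneg (x i))).1 h j (Finset.mem_univ j)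
  exact pow_eq_zero_iff (two_ne_zero) |>.1 this
lemma l1_continuous {n : ℕ} : Continuous (l1 (n := n)) := by
  unfold l1; fun_prop
lemma sqnorm_continuous {n : ℕ} : Continuous (sqnorm (n := n)) := by
  unfold sqnorm; fun_prop

/-- As the penalty parameters `μ_k, τ_k → ∞`, convergent global minimizers of the
quadratic-penalty problems converge to a feasible point whose `u`-component globally
minimizes the original TV–L1–L2 objective. -/
theorem penalty_method_convergence (d m N : ℕ)
    (D : Fin 2 → (Fin d → ℝ) →ₗ[ℝ] (Fin d → ℝ))
    (M : Fin N → (Fin d → ℝ) →ₗ[ℝ] (Fin d → ℝ))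
    (A : (Fin d → ℝ) →ₗ[ℝ] (Fin m → ℝ)) (b : Fin m → ℝ)
    (β lam : ℝ) (hβ : 0 < β) (hlam : 0 < lam)
    (hmin : ∃ u₀ : Fin d → ℝ, ∀ u : Fin d → ℝ,
      tvObj d m N D M A b β lam u₀ ≤ tvObj d m N D M A b β lam u)
    (μ τ : ℕ → ℝ) (hμpos : ∀ k, 0 < μ k) (hτpos : ∀ k, 0 < τ k)
    (hμ : Tendsto μ atTop atTop) (hτ : Tendsto τ atTop atTop)
    (u : ℕ → Fin d → ℝ) (r : Fin 2 → ℕ → Fin d → ℝ) (s : Fin N → ℕ → Fin d → ℝ)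
    (hminseq : ∀ k, ∀ (u' : Fin d → ℝ) (r' : Fin 2 → Fin d → ℝ) (s' : Fin N → Fin d → ℝ),
      penObj d m N D M A b β lam (μ k) (τ k) (u k) (fun i => r i k) (fun i => s i k) ≤
        penObj d m N D M A b β lam (μ k) (τ k) u' r' s')
    (ustar : Fin d → ℝ) (rstar : Fin 2 → Fin d → ℝ) (sstar : Fin N → Fin d → ℝ)
    (hu : Tendsto u atTop (𝓝 ustar))
    (hr : ∀ i, Tendsto (r i) atTop (𝓝 (rstar i)))
    (hs : ∀ i, Tendsto (s i) atTop (𝓝 (sstar i))) :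
    (∀ i, rstar i = D i ustar) ∧ (∀ i, sstar i = M i ustar) ∧
    (∀ x : Fin d → ℝ, tvObj d m N D M A b β lam ustar ≤ tvObj d m N D M A b β lam x) := by
  obtain ⟨u₀, hu₀⟩ := hmin
  set C := tvObj d m N D M A b β lam u₀ with hC
  -- penalty objective at a feasible point equals the original objective
  have hpen_eq : ∀ (μ' τ' : ℝ) (x : Fin d → ℝ),
      penObj d m N D M A b β lam μ' τ' x (fun i => D i x) (fun i => M i x)
        = tvObj d m N D M A b β lam x := by
    intro μ' τ' x
    simp [penObj, tvObj, sqnorm, sub_self]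
  have hFle : ∀ k, penObj d m N D M A b β lam (μ k) (τ k) (u k)
      (fun i => r i k) (fun i => s i k) ≤ C := by
    intro k
    have := hminseq k u₀ (fun i => D i u₀) (fun i => M i u₀)
    rwa [hpen_eq] at this
  have hFleX : ∀ k x, penObj d m N D M A b β lam (μ k) (τ k) (u k)
      (fun i => r i k) (fun i => s i k) ≤ tvObj d m N D M A b β lam x := by
    intro k x
    have := hminseq k x (fun i => D i x) (fun i => M i x)
    rwa [hpen_eq] at this
  -- nonnegativity of the sums
  have hS1nn : ∀ k, 0 ≤ ∑ i, (l1 (r i k) + (μ k / 2) * sqnorm (r i k - D i (u k))) := by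
    intro k
    exact Finset.sum_nonneg fun j _ =>
      add_nonneg (l1_nonneg _) (mul_nonneg (by linarith [hμpos k]) (sqnorm_nonneg _))
  have hS2nn : ∀ k, 0 ≤ ∑ i, (l1 (s i k) + (τ k / 2) * sqnorm (s i k - M i (u k))) := by
    intro k
    exact Finset.sum_nonneg fun j _ =>
      add_nonneg (l1_nonneg _) (mul_nonneg (by linarith [hτpos k]) (sqnorm_nonneg _))
  -- bound of the penalty terms
  have hμbound : ∀ i k, sqnorm (r i k - D i (u k)) ≤ 2 * C / β / μ k := by
    intro i k
    have hterm : (μ k / 2) * sqnorm (r i k - D i (u k)) ≤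
        ∑ j, (l1 (r j k) + (μ k / 2) * sqnorm (r j k - D j (u k))) := by
      calc (μ k / 2) * sqnorm (r i k - D i (u k))
          ≤ l1 (r i k) + (μ k / 2) * sqnorm (r i k - D i (u k)) := by
            have := l1_nonneg (r i k); linarith
        _ ≤ _ := Finset.single_le_sum
            (f := fun j => l1 (r j k) + (μ k / 2) * sqnorm (r j k - D j (u k)))
            (fun j _ =>
              add_nonneg (l1_nonneg _) (mul_nonneg (by linarith [hμpos k]) (sqnorm_nonneg _)))
            (Finset.mem_univ i)
    have hP := hFle k
    simp only [penObj] at hP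
    have hchain : β * ((μ k / 2) * sqnorm (r i k - D i (u k))) ≤ C := by
      have h1 := mul_le_mul_of_nonneg_left hterm hβ.le
      have h2 := mul_nonneg hlam.le (hS2nn k)
      have h3 := sqnorm_nonneg (A (u k) - b)
      linarith
    rw [div_div, le_div_iff₀ (mul_pos hβ (hμpos k))]
    nlinarith [hchain]
  have hτbound : ∀ i k, sqnorm (s i k - M i (u k)) ≤ 2 * C / lam / τ k := by
    intro i k
    have hterm : (τ k / 2) * sqnorm (s i k - M i (u k)) ≤
        ∑ j, (l1 (s j k) + (τ k / 2) * sqnorm (s j k - M j (u k))) := by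
      calc (τ k / 2) * sqnorm (s i k - M i (u k))
          ≤ l1 (s i k) + (τ k / 2) * sqnorm (s i k - M i (u k)) := by
            have := l1_nonneg (s i k); linarith
        _ ≤ _ := Finset.single_le_sum
            (f := fun j => l1 (s j k) + (τ k / 2) * sqnorm (s j k - M j (u k)))
            (fun j _ =>
              add_nonneg (l1_nonneg _) (mul_nonneg (by linarith [hτpos k]) (sqnorm_nonneg _)))
            (Finset.mem_univ i)
    have hP := hFle k
    simp only [penObj] at hP
    have hchain : lam * ((τ k / 2) * sqnorm (s i k - M i (u k))) ≤ C := by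
      have h1 := mul_le_mul_of_nonneg_left hterm hlam.le
      have h2 := mul_nonneg hβ.le (hS1nn k)
      have h3 := sqnorm_nonneg (A (u k) - b)
      linarith
    rw [div_div, le_div_iff₀ (mul_pos hlam (hτpos k))]
    nlinarith [hchain]
  -- feasibility at the limit
  have hrfeas : ∀ i, rstar i = D i ustar := by
    intro i
    have hlim : Tendsto (fun k => sqnorm (r i k - D i (u k))) atTop
        (𝓝 (sqnorm (rstar i - D i ustar))) :=
      (sqnorm_continuous.tendsto _).comp
        ((hr i).sub (((D i).continuous_of_finiteDimensional.tendsto _).comp hu))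
    have hg : Tendsto (fun k => 2 * C / β / μ k) atTop (𝓝 0) :=
      Tendsto.div_atTop tendsto_const_nhds hμ
    have h0 : sqnorm (rstar i - D i ustar) ≤ 0 :=
      le_of_tendsto_of_tendsto' hlim hg (fun k => hμbound i k)
    have := sqnorm_eq_zero (le_antisymm h0 (sqnorm_nonneg _))
    exact (sub_eq_zero.1 this)
  have hsfeas : ∀ i, sstar i = M i ustar := by
    intro i
    have hlim : Tendsto (fun k => sqnorm (s i k - M i (u k))) atTop
        (𝓝 (sqnorm (sstar i - M i ustar))) :=
      (sqnorm_continuous.tendsto _).comp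
        ((hs i).sub (((M i).continuous_of_finiteDimensional.tendsto _).comp hu))
    have hg : Tendsto (fun k => 2 * C / lam / τ k) atTop (𝓝 0) :=
      Tendsto.div_atTop tendsto_const_nhds hτ
    have h0 : sqnorm (sstar i - M i ustar) ≤ 0 :=
      le_of_tendsto_of_tendsto' hlim hg (fun k => hτbound i k)
    have := sqnorm_eq_zero (le_antisymm h0 (sqnorm_nonneg _))
    exact (sub_eq_zero.1 this)
  refine ⟨hrfeas, hsfeas, ?_⟩
  intro x
  -- lower bound on the penalty objective dropping the quadratic terms
  have hG : ∀ k, β * (∑ i, l1 (r i k)) + lam * (∑ i, l1 (s i k))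
      + (1 / 2) * sqnorm (A (u k) - b) ≤ tvObj d m N D M A b β lam x := by
    intro k
    have hP := hFleX k x
    simp only [penObj] at hP
    have h1 : ∑ i, l1 (r i k) ≤ ∑ i, (l1 (r i k) + (μ k / 2) * sqnorm (r i k - D i (u k))) :=
      Finset.sum_le_sum fun j _ => by
        have := mul_nonneg (by linarith [hμpos k] : (0:ℝ) ≤ μ k / 2)
          (sqnorm_nonneg (r j k - D j (u k)))
        linarith
    have h2 : ∑ i, l1 (s i k) ≤ ∑ i, (l1 (s i k) + (τ k / 2) * sqnorm (s i k - M i (u k))) :=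
      Finset.sum_le_sum fun j _ => by
        have := mul_nonneg (by linarith [hτpos k] : (0:ℝ) ≤ τ k / 2)
          (sqnorm_nonneg (s j k - M j (u k)))
        linarith
    have h1' := mul_le_mul_of_nonneg_left h1 hβ.le
    have h2' := mul_le_mul_of_nonneg_left h2 hlam.le
    linarith
  have hlimG : Tendsto (fun k => β * (∑ i, l1 (r i k)) + lam * (∑ i, l1 (s i k))
      + (1 / 2) * sqnorm (A (u k) - b)) atTop
      (𝓝 (β * (∑ i, l1 (rstar i)) + lam * (∑ i, l1 (sstar i))
        + (1 / 2) * sqnorm (A ustar - b))) := by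
    refine Tendsto.add (Tendsto.add ?_ ?_) ?_
    · exact tendsto_const_nhds.mul (tendsto_finset_sum _ fun i _ =>
        (l1_continuous.tendsto _).comp (hr i))
    · exact tendsto_const_nhds.mul (tendsto_finset_sum _ fun i _ =>
        (l1_continuous.tendsto _).comp (hs i))
    · exact tendsto_const_nhds.mul ((sqnorm_continuous.tendsto _).comp
        ((A.continuous_of_finiteDimensional.tendsto _).comp hu |>.sub tendsto_const_nhds))
  have hle := le_of_tendsto hlimG (Filter.Eventually.of_forall hG)
  calc tvObj d m N D M A b β lam ustar
      = β * (∑ i, l1 (rstar i)) + lam * (∑ i, l1 (sstar i))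
        + (1 / 2) * sqnorm (A ustar - b) := by
        simp [tvObj, hrfeas, hsfeas]
    _ ≤ tvObj d m N D M A b β lam x := hle
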